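/- arXiv:2603.14795 — 2 statements merged into one kernel-verified Lean document; each statement's English description precedes it below -/
import Mathlib

section
/- For every integer N ≥ 2, the determinant of the sine matrix S_N equals (−1)^{N⁻(N⁻−1)/2} · N^{N⁻/2} / 2^{N⁻}. -/
/-- The discrete sine matrix `S_N`, of size `N⁻ × N⁻` with `N⁻ = ⌊(N−1)/2⌋`:
its `(m,n)` entry (for `1 ≤ m,n ≤ N⁻`) is `sin(2πmn/N)`. -/
noncomputable def sinMatrix (N : ℕ) : Matrix (Fin ((N - 1) / 2)) (Fin ((N - 1) / 2)) ℝ :=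
  Matrix.of fun m n => Real.sin (2 * Real.pi * ((m : ℕ) + 1) * ((n : ℕ) + 1) / N)

/-!
Orthogonality of the discrete sine transform gives `S_N ^ 2 = (N / 4) • 1`, which fixes
`|det S_N| = (√N / 2) ^ N⁻`. For the sign, `sin ((n + 1) θ) = U_n (cos θ) sin θ` with `U_n`
of leading coefficient `2 ^ n` turns `det S_N` into a positive multiple of the Vandermonde
determinant of the nodes `cos (2π m / N)`, `1 ≤ m ≤ N⁻`; these decrease, so the sign is
`(-1) ^ (N⁻ (N⁻ - 1) / 2)`.
-/

open Real Finset

lemma sum_range_eq_two_nsmul_sum_range_half {M : Type*} [AddCommMonoid M] (N : ℕ) (f : ℕ → M)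
    (h0 : f 0 = 0) (hsymm : ∀ n ≤ N, f (N - n) = f n) (hmid : ∀ n, 2 * n = N → f n = 0) :
    ∑ n ∈ range N, f n = 2 • ∑ n ∈ range ((N - 1) / 2), f (n + 1) := by
  rcases Nat.eq_zero_or_pos N with rfl | hN
  · simp
  set K := (N - 1) / 2
  have hhead : ∑ n ∈ range (N - K), f n = ∑ n ∈ range K, f (n + 1) := by
    rcases Nat.even_or_odd N with ⟨k, hk⟩ | ⟨k, hk⟩
    · rw [show N - K = K + 1 + 1 by omega, sum_range_succ', sum_range_succ,
        hmid (K + 1) (by omega), h0, add_zero, add_zero]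
    · rw [show N - K = K + 1 by omega, sum_range_succ', h0, add_zero]
  have htail : ∑ i ∈ range K, f (N - K + i) = ∑ n ∈ range K, f (n + 1) := by
    rw [← sum_range_reflect]
    refine sum_congr rfl fun i hi => ?_
    rw [mem_range] at hi
    rw [← hsymm (i + 1) (by omega)]
    congr 1
    omega
  calc ∑ n ∈ range N, f n
      = ∑ n ∈ range (N - K), f n + ∑ i ∈ range K, f (N - K + i) := by
        rw [← sum_range_add, Nat.sub_add_cancel (by omega)]
    _ = 2 • ∑ n ∈ range K, f (n + 1) := by rw [hhead, htail, two_nsmul]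

lemma sum_range_cos_two_pi_mul_div (N : ℕ) (j : ℤ) :
    ∑ n ∈ range N, cos (2 * π * j * n / N) = if (N : ℤ) ∣ j then (N : ℝ) else 0 := by
  rcases Nat.eq_zero_or_pos N with rfl | hN
  · simp
  set ζ := Complex.exp (2 * π * Complex.I / N)
  have hζ : IsPrimitiveRoot ζ N := Complex.isPrimitiveRoot_exp N hN.ne'
  have hterm (n : ℕ) : cos (2 * π * j * n / N) = ((ζ ^ j) ^ n).re := by
    rw [← zpow_natCast, ← zpow_mul, ← Complex.exp_int_mul, ← Complex.exp_ofReal_mul_I_re]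
    congr 2
    push_cast
    ring
  simp_rw [hterm, ← Complex.re_sum]
  split_ifs with hdvd
  · simp [(hζ.zpow_eq_one_iff_dvd j).mpr hdvd]
  · have hne : ζ ^ j ≠ 1 := (hζ.zpow_eq_one_iff_dvd j).not.mpr hdvd
    have hpow : (ζ ^ j) ^ N = 1 := by
      rw [← zpow_natCast, ← zpow_mul, mul_comm, zpow_mul, zpow_natCast, hζ.pow_eq_one,
        one_zpow]
    rw [geom_sum_eq hne, hpow, sub_self, zero_div, Complex.zero_re]

lemma sum_range_sin_mul_sin (N : ℕ) (a b : ℤ) :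
    ∑ n ∈ range N, sin (2 * π * a * n / N) * sin (2 * π * b * n / N) =
      ((if (N : ℤ) ∣ a - b then (N : ℝ) else 0) -
        if (N : ℤ) ∣ a + b then (N : ℝ) else 0) / 2 := by
  have hprod (n : ℕ) : sin (2 * π * a * n / N) * sin (2 * π * b * n / N) =
      (cos (2 * π * ↑(a - b) * n / N) - cos (2 * π * ↑(a + b) * n / N)) / 2 := by
    have hsub : 2 * π * ↑(a - b) * n / N = 2 * π * a * n / N - 2 * π * b * n / N := by
      push_cast; ring
    have hadd : 2 * π * ↑(a + b) * n / N = 2 * π * a * n / N + 2 * π * b * n / N := by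
      push_cast; ring
    rw [hsub, hadd, cos_sub, cos_add]
    ring
  simp_rw [hprod, ← sum_div, sum_sub_distrib, sum_range_cos_two_pi_mul_div]

lemma sum_range_half_sin_mul_sin {N a b : ℕ} (ha : 0 < a) (hb : 0 < b) (hab : a + b < N) :
    ∑ n ∈ range ((N - 1) / 2), sin (2 * π * a * (n + 1) / N) * sin (2 * π * b * (n + 1) / N) =
      if a = b then (N : ℝ) / 4 else 0 := by
  have hN : (N : ℝ) ≠ 0 := Nat.cast_ne_zero.mpr (by omega)
  have hsin_sub (c n : ℕ) (hn : n ≤ N) :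
      sin (2 * π * c * ↑(N - n) / N) = - sin (2 * π * c * n / N) := by
    rw [← sin_nat_mul_two_pi_sub]
    congr 1
    push_cast [hn]
    field_simp
  have hsin_half (c n : ℕ) (hn : 2 * n = N) : sin (2 * π * c * n / N) = 0 := by
    rw [← sin_nat_mul_pi c]
    congr 1
    have hn0 : (n : ℝ) ≠ 0 := Nat.cast_ne_zero.mpr (by omega)
    rw [← hn]
    push_cast
    field_simp
  have hhalf := sum_range_eq_two_nsmul_sum_range_half N
    (fun n => sin (2 * π * a * n / N) * sin (2 * π * b * n / N))
    (by simp) (fun n hn => by simp only [hsin_sub _ n hn]; ring)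
    (fun n hn => by simp only [hsin_half _ n hn, zero_mul])
  have hfull := sum_range_sin_mul_sin N a b
  push_cast at hhalf hfull
  have hdiff : (N : ℤ) ∣ (a : ℤ) - b ↔ a = b := by
    refine ⟨fun h => ?_, fun h => by simp [h]⟩
    have := Int.eq_zero_of_dvd_of_natAbs_lt_natAbs h (by omega)
    omega
  have hsum : ¬ (N : ℤ) ∣ (a : ℤ) + b := by
    intro h
    have := Int.le_of_dvd (by omega) h
    omega
  rw [hhalf, nsmul_eq_mul] at hfull
  simp only [hdiff, hsum, if_false] at hfull
  split_ifs at hfull ⊢ <;> linarith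

open Matrix Polynomial Polynomial.Chebyshev

lemma sinMatrix_mul_self (N : ℕ) : sinMatrix N * sinMatrix N = ((N : ℝ) / 4) • 1 := by
  ext m k
  have hterm (n : Fin ((N - 1) / 2)) : sinMatrix N m n * sinMatrix N n k =
      sin (2 * π * ↑((m : ℕ) + 1) * ((n : ℕ) + 1) / N) *
        sin (2 * π * ↑((k : ℕ) + 1) * ((n : ℕ) + 1) / N) := by
    simp only [sinMatrix, of_apply]
    push_cast
    ring_nf
  simp only [mul_apply, hterm, Matrix.smul_apply, Matrix.one_apply, smul_eq_mul]
  rw [Fin.sum_univ_eq_sum_range (fun n => sin (2 * π * ↑((m : ℕ) + 1) * (n + 1) / N) *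
      sin (2 * π * ↑((k : ℕ) + 1) * (n + 1) / N)),
    sum_range_half_sin_mul_sin (by omega) (by omega) (by omega)]
  simp [Fin.val_inj]

lemma det_sinMatrix_sq (N : ℕ) : (sinMatrix N).det ^ 2 = ((N : ℝ) / 4) ^ ((N - 1) / 2) := by
  rw [sq, ← det_mul, sinMatrix_mul_self, det_smul, det_one, mul_one, Fintype.card_fin]

theorem Matrix.det_eval_matrixOfPolynomials {R : Type*} [CommRing R] {n : ℕ} (v : Fin n → R)
    (p : Fin n → R[X]) (h_deg : ∀ i, (p i).natDegree = i) :
    (of fun i j => (p j).eval (v i)).det = (∏ i, (p i).leadingCoeff) * (vandermonde v).det := by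
  rw [eval_matrixOfPolynomials_eq_vandermonde_mul_matrixOfPolynomials v p (fun i => (h_deg i).le),
    det_mul, det_of_isUpperTriangular (matrixOfPolynomials_blockTriangular p fun i => (h_deg i).le),
    mul_comm]
  congr 1
  refine prod_congr rfl fun i _ => ?_
  rw [of_apply, leadingCoeff, h_deg]

theorem Matrix.det_vandermonde_neg {R : Type*} [CommRing R] {n : ℕ} (v : Fin n → R) :
    (vandermonde (-v)).det = (-1) ^ (n * (n - 1) / 2) * (vandermonde v).det := by
  have h : vandermonde (-v) = of fun i (j : Fin n) => (-1 : R) ^ (j : ℕ) * vandermonde v i j := by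
    ext i j
    rw [vandermonde_apply, of_apply, vandermonde_apply, Pi.neg_apply, neg_pow]
  rw [h, det_mul_row, prod_pow_eq_pow_sum, Fin.sum_univ_eq_sum_range (fun i => i), sum_range_id]

theorem Matrix.det_vandermonde_pos_of_strictMono {R : Type*} [CommRing R] [LinearOrder R]
    [IsStrictOrderedRing R] {n : ℕ} {v : Fin n → R} (hv : StrictMono v) :
    0 < (vandermonde v).det := by
  rw [det_vandermonde]
  exact prod_pos fun i _ => prod_pos fun j hj => sub_pos.mpr (hv (mem_Ioi.mp hj))

lemma det_sin_succ_mul {n : ℕ} (θ : Fin n → ℝ) :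
    (of fun i j : Fin n => sin (((j : ℕ) + 1) * θ i)).det =
      (∏ i, sin (θ i)) * (∏ j : Fin n, (2 : ℝ) ^ (j : ℕ)) *
        (vandermonde fun i => cos (θ i)).det := by
  have h : (of fun i j : Fin n => sin (((j : ℕ) + 1) * θ i)) =
      of fun i j =>
        sin (θ i) * (of fun i (j : Fin n) => (U ℝ (j : ℕ)).eval (cos (θ i))) i j := by
    ext i j
    rw [of_apply, of_apply, of_apply, mul_comm (sin _), U_real_cos]
    push_cast
    rfl
  rw [h, det_mul_column, det_eval_matrixOfPolynomials _ _ fun j => natDegree_U_natCast ℝ j]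
  simp only [leadingCoeff_U_natCast, mul_assoc]

lemma neg_one_pow_mul_det_sin_succ_mul_pos {n : ℕ} {θ : Fin n → ℝ} (hθ : StrictMono θ)
    (hθ_mem : ∀ i, θ i ∈ Set.Ioo 0 π) :
    0 < (-1) ^ (n * (n - 1) / 2) * (of fun i j : Fin n => sin (((j : ℕ) + 1) * θ i)).det := by
  have hcos : StrictMono (-fun i => cos (θ i)) := fun i j hij =>
    neg_lt_neg (cos_lt_cos_of_nonneg_of_le_pi (hθ_mem i).1.le (hθ_mem j).2.le (hθ hij))
  rw [det_sin_succ_mul, mul_left_comm, ← det_vandermonde_neg]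
  have hsin : 0 < ∏ i, sin (θ i) :=
    prod_pos fun i _ => sin_pos_of_pos_of_lt_pi (hθ_mem i).1 (hθ_mem i).2
  have hpow : 0 < ∏ j : Fin n, (2 : ℝ) ^ (j : ℕ) := prod_pos fun j _ => by positivity
  exact mul_pos (mul_pos hsin hpow) (det_vandermonde_pos_of_strictMono hcos)

lemma neg_one_pow_mul_det_sinMatrix_pos (N : ℕ) :
    0 < (-1) ^ ((N - 1) / 2 * ((N - 1) / 2 - 1) / 2) * (sinMatrix N).det := by
  have hsinMatrix : sinMatrix N =
      of fun (m n : Fin ((N - 1) / 2)) =>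
        sin (((n : ℕ) + 1) * (2 * π * ((m : ℕ) + 1) / N)) := by
    ext m n
    simp only [sinMatrix, of_apply]
    ring_nf
  rw [hsinMatrix]
  refine neg_one_pow_mul_det_sin_succ_mul_pos (fun i j hij => ?_) fun m => ?_
  · have hN : (0 : ℝ) < N := by exact_mod_cast (by omega : 0 < N)
    gcongr
    exact_mod_cast hij
  · have hm : 2 * ((m : ℝ) + 1) < N := by exact_mod_cast (by omega : 2 * ((m : ℕ) + 1) < N)
    have hN : (0 : ℝ) < N := by linarith [m.val.cast_nonneg (α := ℝ)]
    refine ⟨by positivity, ?_⟩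
    rw [div_lt_iff₀ hN]
    nlinarith [pi_pos]

lemma eq_neg_one_pow_mul_of_sq_eq {R : Type*} [CommRing R] [LinearOrder R] [IsStrictOrderedRing R]
    {x t : R} (k : ℕ) (ht : 0 ≤ t) (hsq : x ^ 2 = t ^ 2) (hsign : 0 < (-1) ^ k * x) :
    x = (-1) ^ k * t := by
  have hε : ((-1 : R) ^ k) ^ 2 = 1 := by rw [← pow_mul, mul_comm, pow_mul, neg_one_sq, one_pow]
  have h : (-1) ^ k * x = t := (sq_eq_sq₀ hsign.le ht).mp (by rw [mul_pow, hε, one_mul, hsq])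
  rw [← h, ← mul_assoc, ← sq, hε, one_mul]

theorem det_sinMatrix_general (N : ℕ) :
    (sinMatrix N).det =
      (-1 : ℝ) ^ ((N - 1) / 2 * ((N - 1) / 2 - 1) / 2) *
        Real.sqrt N ^ ((N - 1) / 2) / 2 ^ ((N - 1) / 2) := by
  rw [mul_div_assoc]
  refine eq_neg_one_pow_mul_of_sq_eq _ (by positivity) ?_ (neg_one_pow_mul_det_sinMatrix_pos N)
  rw [det_sinMatrix_sq, ← div_pow, ← pow_mul, pow_mul', div_pow (√N), sq_sqrt N.cast_nonneg]
  norm_num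

/-- For every integer `N ≥ 2`,
`det S_N = (−1)^{N⁻(N⁻−1)/2} · N^{N⁻/2} / 2^{N⁻}` where `N⁻ = ⌊(N−1)/2⌋`. -/
theorem det_sinMatrix (N : ℕ) (hN : 2 ≤ N) :
    (sinMatrix N).det =
      (-1 : ℝ) ^ ((N - 1) / 2 * ((N - 1) / 2 - 1) / 2) *
        Real.sqrt N ^ ((N - 1) / 2) / 2 ^ ((N - 1) / 2) :=
  det_sinMatrix_general N
end

section
/- Let k ≥ 3 be an odd integer, M ≥ 2 an integer, and 1 ≤ t ≤ M−1. Then (1/2)·Σ_{r=1}^{M} B̃_k(r/M)·sin(2πtr/M) = ((−1)^{(k+1)/2}·k! / (2·(2π)^k)) · M^{1−k} · ( ζ(k, t/M) − ζ(k, 1 − t/M) ). -/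
open scoped Classical in
/-- The periodic Bernoulli function `B̃_k(x) = B_k({x})`, with the convention
`B̃_1(x) = 0` for integer `x`. -/
noncomputable def periodicBernoulli (k : ℕ) (x : ℝ) : ℝ :=
  if k = 1 ∧ Int.fract x = 0 then 0
  else Polynomial.aeval (Int.fract x) (Polynomial.bernoulli k)

/-- The Hurwitz zeta value `ζ(k,a) = Σ_{n ≥ 0} (n+a)^{−k}` (for `k ≥ 2`, `0 < a ≤ 1`). -/
noncomputable def hurwitzZetaValue (k : ℕ) (a : ℝ) : ℝ :=
  ∑' n : ℕ, 1 / ((n : ℝ) + a) ^ k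

/-!
Since `k` is odd and at least `3`, `B̃_k` is given everywhere by its Fourier sine series
`B̃_k(x) = (-1)^((k+1)/2) · 2 · k! / (2π)^k · Σ_{n ≥ 1} sin(2πnx) / n^k`.
Inserting it and exchanging the finite sum over `r` with the series, the orthogonality of the
sines at the `M`-th roots of unity reduces the `r`-sum to `M/2` times the indicator of
`n ≡ t` minus that of `n ≡ -t (mod M)`, and the series `Σ_{n ≡ a} n^(-k)` is
`M^(-k) ζ(k, a/M)`.
-/

open Finset Real
open scoped Nat

lemma sum_Icc_pow_eq_ite_of_pow_eq_one {z : ℂ} {M : ℕ} (hz : z ^ M = 1) :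
    ∑ r ∈ Icc 1 M, z ^ r = if z = 1 then (M : ℂ) else 0 := by
  split_ifs with h1
  · simp [h1]
  · have hshift : ∑ r ∈ Icc 1 M, z ^ r = z * ∑ r ∈ range M, z ^ r := by
      rw [mul_sum, ← Ico_add_one_right_eq_Icc, sum_Ico_eq_sum_range]
      simp [pow_succ', add_comm]
    rw [hshift, geom_sum_eq h1, hz, sub_self, zero_div, mul_zero]

lemma sum_Icc_cos_two_pi_mul_div (M : ℕ) (c : ℤ) :
    ∑ r ∈ Icc 1 M, cos (2 * π * c * r / M) = if (c : ZMod M) = 0 then (M : ℝ) else 0 := by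
  rcases eq_or_ne M 0 with rfl | hM
  · simp
  set ζ := Complex.exp (2 * π * Complex.I / M)
  have hζ : IsPrimitiveRoot ζ M := Complex.isPrimitiveRoot_exp M hM
  have hcos (r : ℕ) : cos (2 * π * c * r / M) = ((ζ ^ c) ^ r).re := by
    rw [← zpow_natCast, ← zpow_mul, ← Complex.exp_int_mul, ← Complex.exp_ofReal_mul_I_re]
    push_cast
    ring_nf
  have hpow : (ζ ^ c) ^ M = 1 := by
    rw [← zpow_natCast, ← zpow_mul, mul_comm, zpow_mul, zpow_natCast, hζ.pow_eq_one, one_zpow]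
  simp_rw [hcos, ← Complex.re_sum, sum_Icc_pow_eq_ite_of_pow_eq_one hpow, hζ.zpow_eq_one_iff_dvd,
    ZMod.intCast_zmod_eq_zero_iff_dvd]
  split_ifs <;> simp

lemma sum_Icc_sin_mul_sin (M : ℕ) (n t : ℤ) :
    ∑ r ∈ Icc 1 M, sin (2 * π * n * r / M) * sin (2 * π * t * r / M) =
      M / 2 * ((if (n : ZMod M) = t then 1 else 0) - (if (n : ZMod M) = -t then 1 else 0)) := by
  have hprod (r : ℕ) : sin (2 * π * n * r / M) * sin (2 * π * t * r / M) =
      (cos (2 * π * ↑(n - t) * r / M) - cos (2 * π * ↑(n + t) * r / M)) / 2 := by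
    rw [eq_div_iff two_ne_zero, mul_comm _ (2 : ℝ), ← mul_assoc, two_mul_sin_mul_sin]
    push_cast
    ring_nf
  simp_rw [hprod, ← sum_div, sum_sub_distrib, sum_Icc_cos_two_pi_mul_div, Int.cast_sub,
    Int.cast_add, sub_eq_zero, ← sub_eq_zero (b := -(t : ZMod M)), sub_neg_eq_add]
  split_ifs <;> ring

lemma sum_Icc_one_div_pow_mul_sin_mul_sin (k : ℕ) {M t : ℕ} (ht : t ≤ M) (n : ℕ) :
    ∑ r ∈ Icc 1 M, 1 / (n : ℝ) ^ k * sin (2 * π * n * (r / M)) * sin (2 * π * t * r / M) =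
      M / 2 * ((if (n : ZMod M) = t then 1 / (n : ℝ) ^ k else 0) -
        (if (n : ZMod M) = (M - t : ℕ) then 1 / (n : ℝ) ^ k else 0)) := by
  have horth := sum_Icc_sin_mul_sin M n t
  push_cast at horth
  simp_rw [← mul_div_assoc, mul_assoc (1 / (n : ℝ) ^ k), ← mul_sum, horth, Nat.cast_sub ht,
    ZMod.natCast_self, zero_sub]
  split_ifs <;> ring

lemma summable_one_div_nat_add_pow (a : ℝ) {k : ℕ} (hk : 2 ≤ k) :
    Summable fun n : ℕ => 1 / ((n : ℝ) + a) ^ k := by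
  refine Summable.of_norm ?_
  simpa [Real.rpow_natCast] using
    (Real.summable_one_div_nat_add_rpow a k).mpr (by exact_mod_cast hk)

lemma hasSum_ite_natCast_eq_one_div_pow {k M a : ℕ} (hk : 2 ≤ k) (ha : a < M) :
    HasSum (fun n : ℕ => if (n : ZMod M) = a then 1 / (n : ℝ) ^ k else 0)
      (1 / (M : ℝ) ^ k * hurwitzZetaValue k (a / M)) := by
  have hM : (M : ℝ) ≠ 0 := Nat.cast_ne_zero.mpr (by omega)
  have hmod (n : ℕ) : (n : ZMod M) = a ↔ n % M = a := by
    rw [ZMod.natCast_eq_natCast_iff', Nat.mod_eq_of_lt ha]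
  have hinj : Function.Injective fun i : ℕ => a + i * M := fun i j h => by
    simpa [show M ≠ 0 by omega] using h
  have hsupp : ∀ n ∉ Set.range fun i : ℕ => a + i * M,
      (if (n : ZMod M) = a then 1 / (n : ℝ) ^ k else 0) = 0 := by
    intro n hn
    refine if_neg fun h => hn ⟨n / M, ?_⟩
    rw [← (hmod n).mp h]
    exact Nat.mod_add_div' n M
  rw [← hinj.hasSum_iff hsupp]
  have hterm (i : ℕ) :
      (if ((a + i * M : ℕ) : ZMod M) = a then 1 / ((a + i * M : ℕ) : ℝ) ^ k else 0) =
        1 / (M : ℝ) ^ k * (1 / ((i : ℝ) + a / M) ^ k) := by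
    rw [if_pos (by simp), one_div_mul_one_div, ← mul_pow]
    congr 2
    push_cast
    field_simp
    ring
  simp only [Function.comp_def, hterm]
  exact (summable_one_div_nat_add_pow _ hk).hasSum.mul_left _

lemma periodicBernoulli_eq_eval_fract {k : ℕ} (hk : k ≠ 1) (x : ℝ) :
    periodicBernoulli k x =
      (Polynomial.map (algebraMap ℚ ℝ) (Polynomial.bernoulli k)).eval (Int.fract x) := by
  rw [periodicBernoulli, if_neg (fun h => hk h.1), Polynomial.aeval_def, Polynomial.eval_map]

lemma hasSum_one_div_nat_pow_mul_sin_periodicBernoulli {k : ℕ} (hk : k ≠ 0) (x : ℝ) :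
    HasSum (fun n : ℕ => 1 / (n : ℝ) ^ (2 * k + 1) * sin (2 * π * n * x))
      ((-1 : ℝ) ^ (k + 1) * (2 * π) ^ (2 * k + 1) / 2 / (2 * k + 1)! *
        periodicBernoulli (2 * k + 1) x) := by
  have hsin (n : ℕ) : sin (2 * π * n * x) = sin (2 * π * n * Int.fract x) := by
    rw [Int.fract, ← sin_add_int_mul_two_pi (2 * π * n * (x - ⌊x⌋)) (n * ⌊x⌋)]
    push_cast
    ring_nf
  simp_rw [hsin, periodicBernoulli_eq_eval_fract (by omega : 2 * k + 1 ≠ 1)]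
  exact hasSum_one_div_nat_pow_mul_sin hk ⟨Int.fract_nonneg x, (Int.fract_lt_one x).le⟩

theorem sin_transform_periodicBernoulli_general (k M t : ℕ) (hk : 3 ≤ k) (hko : Odd k)
    (ht1 : 1 ≤ t) (ht2 : t ≤ M - 1) :
    (1 / 2 : ℝ) * ∑ r ∈ Finset.Icc 1 M,
        periodicBernoulli k ((r : ℝ) / M) * Real.sin (2 * Real.pi * t * r / M) =
      ((-1 : ℝ) ^ ((k + 1) / 2) * (Nat.factorial k) / (2 * (2 * Real.pi) ^ k)) *
        (M : ℝ) ^ (1 - (k : ℤ)) *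
        (hurwitzZetaValue k ((t : ℝ) / M) - hurwitzZetaValue k (1 - (t : ℝ) / M)) := by
  obtain ⟨j, rfl⟩ := hko
  have htM : t < M := by omega
  have hM0 : (M : ℝ) ≠ 0 := Nat.cast_ne_zero.mpr (by omega)
  have hfourier := hasSum_sum fun r (_ : r ∈ Icc 1 M) =>
    (hasSum_one_div_nat_pow_mul_sin_periodicBernoulli (by omega : j ≠ 0) (r / M)).mul_right
      (sin (2 * π * t * r / M))
  have hk2 : 2 ≤ 2 * j + 1 := by omega
  have hzeta := ((hasSum_ite_natCast_eq_one_div_pow hk2 htM).sub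
    (hasSum_ite_natCast_eq_one_div_pow hk2 (by omega : M - t < M))).mul_left (M / 2 : ℝ)
  simp_rw [sum_Icc_one_div_pow_mul_sin_mul_sin (2 * j + 1) htM.le] at hfourier
  have hMt : ((M - t : ℕ) : ℝ) / M = 1 - t / M := by
    rw [Nat.cast_sub htM.le, sub_div, div_self hM0]
  rw [show (2 * j + 1 + 1) / 2 = j + 1 by omega]
  calc _ = (-1 : ℝ) ^ (j + 1) * (2 * j + 1)! / (2 * π) ^ (2 * j + 1) * ∑ r ∈ Icc 1 M,
          (-1 : ℝ) ^ (j + 1) * (2 * π) ^ (2 * j + 1) / 2 / (2 * j + 1)! *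
            periodicBernoulli (2 * j + 1) (r / M) * sin (2 * π * t * r / M) := by
        simp_rw [mul_assoc _ (periodicBernoulli _ _), ← mul_sum, ← mul_assoc]
        congr 1
        rcases neg_one_pow_eq_or ℝ (j + 1) with h | h <;> rw [h] <;> field_simp
    _ = _ := by
        rw [hfourier.unique hzeta, hMt, zpow_sub₀ hM0, zpow_one, zpow_natCast]
        ring

/-- For odd `k ≥ 3`, `M ≥ 2` and `1 ≤ t ≤ M−1`,
`(1/2)·Σ_{r=1}^{M} B̃_k(r/M)·sin(2πtr/M)
  = ((−1)^{(k+1)/2}·k!/(2·(2π)^k)) · M^{1−k} · (ζ(k,t/M) − ζ(k,1−t/M))`. -/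
theorem sin_transform_periodicBernoulli (k M t : ℕ) (hk : 3 ≤ k) (hko : Odd k)
    (hM : 2 ≤ M) (ht1 : 1 ≤ t) (ht2 : t ≤ M - 1) :
    (1 / 2 : ℝ) * ∑ r ∈ Finset.Icc 1 M,
        periodicBernoulli k ((r : ℝ) / M) * Real.sin (2 * Real.pi * t * r / M) =
      ((-1 : ℝ) ^ ((k + 1) / 2) * (Nat.factorial k) / (2 * (2 * Real.pi) ^ k)) *
        (M : ℝ) ^ (1 - (k : ℤ)) *
        (hurwitzZetaValue k ((t : ℝ) / M) - hurwitzZetaValue k (1 - (t : ℝ) / M)) :=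
  sin_transform_periodicBernoulli_general k M t hk hko ht1 ht2
end
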